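/- For positive integers M₁, M₂, N with M = min(M₁,M₂): for all r in [0, min(M, N)], d_{M₁+M₂, N}(r) ≥ d_{M, N}(r), where d_{M,N} is the piecewise-linear interpolation of (k,(M−k)(N−k)). -/

import Mathlib

/-- The optimal point-to-point MIMO DMT curve: the piecewise-linear interpolation of
the points `(k, (M-k)(N-k))`, `k = 0, …, min M N`, written via `k = ⌊r⌋`. -/
noncomputable def dmt (M N : ℕ) (r : ℝ) : ℝ :=
  ((M : ℝ) - ⌊r⌋) * ((N : ℝ) - ⌊r⌋) - (r - ⌊r⌋) * ((M : ℝ) + (N : ℝ) - 2 * ⌊r⌋ - 1)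

theorem dmt_sub_dmt (M M' N : ℕ) (r : ℝ) :
    dmt M' N r - dmt M N r = ((M' : ℝ) - M) * (N - r) := by
  unfold dmt
  ring

theorem dmt_monotone_left {N : ℕ} {r : ℝ} (hr : r ≤ N) : Monotone fun M => dmt M N r := by
  intro M M' hM
  have hM' : (M : ℝ) ≤ M' := by exact_mod_cast hM
  show dmt M N r ≤ dmt M' N r
  rw [← sub_nonneg, dmt_sub_dmt]
  exact mul_nonneg (sub_nonneg.mpr hM') (sub_nonneg.mpr hr)

theorem stmt17_general (M1 M2 N : ℕ) :
    ∀ r ∈ Set.Icc (0 : ℝ) ((min (min M1 M2) N : ℕ) : ℝ),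
      dmt (min M1 M2) N r ≤ dmt (M1 + M2) N r := by
  intro r hr
  have hrN : r ≤ N := hr.2.trans (by exact_mod_cast min_le_right _ _)
  exact dmt_monotone_left hrN ((min_le_left M1 M2).trans (Nat.le_add_right _ _))

/-- Adding transmit antennas cannot decrease the DMT curve:
`d_{M₁+M₂,N}(r) ≥ d_{min(M₁,M₂),N}(r)` on the common domain. -/
theorem stmt17 (M1 M2 N : ℕ) (hM1 : 0 < M1) (hM2 : 0 < M2) (hN : 0 < N) :
    ∀ r ∈ Set.Icc (0 : ℝ) ((min (min M1 M2) N : ℕ) : ℝ),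
      dmt (min M1 M2) N r ≤ dmt (M1 + M2) N r :=
  stmt17_general M1 M2 N
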